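/- Let A ∈ ℂ^{m×n}, b ∈ ℂ^m, μ > 0. Then strong duality holds between the unconstrained basis pursuit denoising problem and its dual: the minimum over x ∈ ℂ^n of ‖x‖₁ + (1/(2μ))‖A x − b‖₂² equals the maximum over y ∈ ℂ^m with ‖A*y‖_∞ ≤ 1 of Re(b*y) − (μ/2)‖y‖₂², and both the minimum and the maximum are attained. -/

import Mathlib

/-!
The dual certificate is the scaled residual `ŷ = (b - A x̂) / μ` of a primal minimizer `x̂`, which
exists because the primal objective is continuous and coercive. For all `x`, `y` the duality gap is
`P x - D y = (‖x‖₁ - Re⟪A* y, x⟫) + ‖A x - b + μ y‖₂² / (2μ)`, so `D y ≤ P x` whenever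
`‖A* y‖_∞ ≤ 1`, and the second term vanishes at `(x̂, ŷ)`. Comparing `P x̂` with `P (x̂ + t d)` as
`t → 0⁺` shows that `A* ŷ` is a subgradient of `‖·‖₁` at `x̂`: the direction `d = sign((A* ŷ)ⱼ) eⱼ`
gives `|(A* ŷ)ⱼ| ≤ 1`, and `d = -x̂` gives `‖x̂‖₁ ≤ Re⟪A* ŷ, x̂⟫`. Hence the gap at `(x̂, ŷ)`
is zero.
-/

open Filter Topology Matrix Finset

noncomputable def l1 {ι : Type*} [Fintype ι] (v : ι → ℂ) : ℝ := ∑ i, ‖v i‖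

noncomputable def l2sq {ι : Type*} [Fintype ι] (v : ι → ℂ) : ℝ := ∑ i, ‖v i‖^2

noncomputable def l2 {ι : Type*} [Fintype ι] (v : ι → ℂ) : ℝ := Real.sqrt (l2sq v)

noncomputable def linf {ι : Type*} [Fintype ι] (v : ι → ℂ) : ℝ := ⨆ i, ‖v i‖

noncomputable def csign (w : ℂ) : ℂ := if w = 0 then 0 else w / (‖w‖ : ℂ)

noncomputable def shrink {ι : Type*} [Fintype ι] (z : ι → ℂ) (ν : ℝ) : ι → ℂ :=
  fun i => ((max (‖z i‖ - ν) 0 : ℝ) : ℂ) * csign (z i)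

noncomputable def reInner {ι : Type*} [Fintype ι] (y v : ι → ℂ) : ℝ :=
  (∑ i, (starRingEnd ℂ) (y i) * v i).re

noncomputable def projBall {ι : Type*} [Fintype ι] (t : ℝ) (v : ι → ℂ) : ι → ℂ :=
  if l2 v ≤ t then v else (t / l2 v) • v

noncomputable def projBox {ι : Type*} [Fintype ι] (v : ι → ℂ) : ι → ℂ :=
  fun i => if ‖v i‖ ≤ 1 then v i else v i / (‖v i‖ : ℂ)

noncomputable def lmax {m n : ℕ} (A : Matrix (Fin m) (Fin n) ℂ) : ℝ :=
  ⨆ i, (Matrix.isHermitian_conjTranspose_mul_self A).eigenvalues i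

section Inner

variable {ι : Type*} [Fintype ι]

lemma reInner_eq_re_dotProduct (y v : ι → ℂ) : reInner y v = (star y ⬝ᵥ v).re := by
  simp [reInner, dotProduct]

lemma reInner_comm (u v : ι → ℂ) : reInner u v = reInner v u := by
  rw [reInner_eq_re_dotProduct, star_dotProduct, Complex.star_def, Complex.conj_re,
    ← reInner_eq_re_dotProduct]

lemma reInner_add_right (y u v : ι → ℂ) : reInner y (u + v) = reInner y u + reInner y v := by
  simp [reInner_eq_re_dotProduct, dotProduct_add]

lemma reInner_smul_right (t : ℝ) (y v : ι → ℂ) : reInner y (t • v) = t * reInner y v := by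
  simp [reInner_eq_re_dotProduct, dotProduct_smul]

lemma reInner_neg_right (y v : ι → ℂ) : reInner y (-v) = -reInner y v := by
  simp [reInner_eq_re_dotProduct]

lemma reInner_sub_right (y u v : ι → ℂ) : reInner y (u - v) = reInner y u - reInner y v := by
  simp [reInner_eq_re_dotProduct, dotProduct_sub]

lemma reInner_add_left (u v y : ι → ℂ) : reInner (u + v) y = reInner u y + reInner v y := by
  rw [reInner_comm, reInner_add_right, reInner_comm y, reInner_comm y]

lemma reInner_smul_left (t : ℝ) (y v : ι → ℂ) : reInner (t • y) v = t * reInner y v := by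
  rw [reInner_comm, reInner_smul_right, reInner_comm]

lemma l2sq_eq_reInner_self (v : ι → ℂ) : l2sq v = reInner v v := by
  simp only [l2sq, reInner, Complex.conj_mul', Complex.re_sum]
  norm_cast

lemma l2sq_nonneg (v : ι → ℂ) : 0 ≤ l2sq v :=
  Finset.sum_nonneg fun _ _ => sq_nonneg _

@[simp] lemma l2sq_zero : l2sq (0 : ι → ℂ) = 0 := by
  simp [l2sq]

lemma l2sq_add (u v : ι → ℂ) : l2sq (u + v) = l2sq u + 2 * reInner u v + l2sq v := by
  simp only [l2sq_eq_reInner_self, reInner_add_left, reInner_add_right, reInner_comm v u]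
  ring

lemma l2sq_smul (t : ℝ) (v : ι → ℂ) : l2sq (t • v) = t ^ 2 * l2sq v := by
  simp only [l2sq_eq_reInner_self, reInner_smul_left, reInner_smul_right]
  ring

lemma reInner_conjTranspose_mulVec {κ : Type*} [Fintype κ] (A : Matrix κ ι ℂ) (y : κ → ℂ)
    (x : ι → ℂ) : reInner (Aᴴ *ᵥ y) x = reInner y (A *ᵥ x) := by
  rw [reInner_eq_re_dotProduct, reInner_eq_re_dotProduct, star_mulVec, conjTranspose_conjTranspose,
    dotProduct_mulVec]

end Inner

section L1

variable {ι : Type*} [Fintype ι]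

lemma norm_apply_le_l1 (x : ι → ℂ) (i : ι) : ‖x i‖ ≤ l1 x :=
  Finset.single_le_sum (fun j _ => norm_nonneg (x j)) (Finset.mem_univ i)

lemma norm_le_l1 (x : ι → ℂ) : ‖x‖ ≤ l1 x :=
  (pi_norm_le_iff_of_nonneg (Finset.sum_nonneg fun i _ => norm_nonneg (x i))).2
    (norm_apply_le_l1 x)

lemma l1_add_le (x y : ι → ℂ) : l1 (x + y) ≤ l1 x + l1 y := by
  rw [l1, l1, l1, ← Finset.sum_add_distrib]
  exact Finset.sum_le_sum fun i _ => norm_add_le (x i) (y i)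

lemma l1_smul (t : ℝ) (x : ι → ℂ) : l1 (t • x) = |t| * l1 x := by
  simp [l1, Finset.mul_sum]

lemma l1_single [DecidableEq ι] (j : ι) (c : ℂ) : l1 (Pi.single j c) = ‖c‖ := by
  rw [l1, Finset.sum_eq_single j (fun i _ hij => by simp [hij]) (by simp)]
  simp

lemma reInner_single [DecidableEq ι] (y : ι → ℂ) (j : ι) (c : ℂ) :
    reInner y (Pi.single j c) = ((starRingEnd ℂ) (y j) * c).re := by
  rw [reInner, Finset.sum_eq_single j (fun i _ hij => by simp [hij]) (by simp)]
  simp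

lemma reInner_le_l1 {g : ι → ℂ} (hg : ∀ j, ‖g j‖ ≤ 1) (x : ι → ℂ) : reInner g x ≤ l1 x := by
  simp only [reInner, Complex.re_sum, l1]
  refine Finset.sum_le_sum fun i _ => ?_
  calc ((starRingEnd ℂ) (g i) * x i).re ≤ ‖g i‖ * ‖x i‖ := by
        simpa using Complex.re_le_norm ((starRingEnd ℂ) (g i) * x i)
    _ ≤ ‖x i‖ := mul_le_of_le_one_left (norm_nonneg _) (hg i)

lemma linf_le_iff {c : ℝ} (hc : 0 ≤ c) (v : ι → ℂ) : linf v ≤ c ↔ ∀ i, ‖v i‖ ≤ c :=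
  ⟨fun h i => (le_ciSup (Set.finite_range fun i => ‖v i‖).bddAbove i).trans h,
    fun h => Real.iSup_le h hc⟩

end L1

lemma norm_csign_le_one (w : ℂ) : ‖csign w‖ ≤ 1 := by
  unfold csign
  split_ifs with hw
  · simp
  · simp [hw]

lemma re_conj_mul_csign (w : ℂ) : ((starRingEnd ℂ) w * csign w).re = ‖w‖ := by
  unfold csign
  split_ifs with hw
  · simp [hw]
  · rw [mul_div_assoc', Complex.conj_mul', ← Complex.ofReal_pow, ← Complex.ofReal_div,
      Complex.ofReal_re, sq, mul_div_assoc, div_self (norm_ne_zero_iff.2 hw), mul_one]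

lemma nonpos_of_forall_mul_le_sq_mul {a C : ℝ}
    (h : ∀ t : ℝ, 0 < t → t ≤ 1 → t * a ≤ t ^ 2 * C) : a ≤ 0 := by
  have hlim : Tendsto (fun t : ℝ => t * C) (𝓝[>] 0) (𝓝 0) := by
    simpa using ((continuous_mul_const C).tendsto 0).mono_left nhdsWithin_le_nhds
  refine ge_of_tendsto hlim ?_
  filter_upwards [Ioc_mem_nhdsGT one_pos] with t ⟨ht0, ht1⟩
  have := h t ht0 ht1
  rw [sq, mul_assoc] at this
  exact le_of_mul_le_mul_left this ht0

section Subgradient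

variable {ι : Type*} [Fintype ι] {g x : ι → ℂ}

lemma norm_le_one_of_forall_directional
    (h : ∀ d : ι → ℂ, ∃ C : ℝ, ∀ t : ℝ, 0 < t → t ≤ 1 →
      t * reInner g d ≤ l1 (x + t • d) - l1 x + t ^ 2 * C) (j : ι) : ‖g j‖ ≤ 1 := by
  classical
  set d : ι → ℂ := Pi.single j (csign (g j))
  obtain ⟨C, hC⟩ := h d
  suffices ‖g j‖ - 1 ≤ 0 by linarith
  refine nonpos_of_forall_mul_le_sq_mul (C := C) fun t ht0 ht1 => ?_
  have hstep := hC t ht0 ht1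
  have hl1 : l1 (x + t • d) ≤ l1 x + t :=
    calc l1 (x + t • d) ≤ l1 x + l1 (t • d) := l1_add_le _ _
      _ = l1 x + t * ‖csign (g j)‖ := by rw [l1_smul, l1_single, abs_of_pos ht0]
      _ ≤ l1 x + t := by nlinarith [norm_csign_le_one (g j)]
  rw [reInner_single, re_conj_mul_csign] at hstep
  linarith

lemma l1_le_reInner_of_forall_directional
    (h : ∀ d : ι → ℂ, ∃ C : ℝ, ∀ t : ℝ, 0 < t → t ≤ 1 →
      t * reInner g d ≤ l1 (x + t • d) - l1 x + t ^ 2 * C) : l1 x ≤ reInner g x := by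
  obtain ⟨C, hC⟩ := h (-x)
  suffices l1 x - reInner g x ≤ 0 by linarith
  refine nonpos_of_forall_mul_le_sq_mul (C := C) fun t ht0 ht1 => ?_
  have hstep := hC t ht0 ht1
  have hx : x + t • -x = (1 - t) • x := by module
  rw [hx, l1_smul, abs_of_nonneg (by linarith), reInner_neg_right] at hstep
  linarith

end Subgradient

section QP

variable {ι κ : Type*} [Fintype ι] [Fintype κ] (A : Matrix κ ι ℂ) (b : κ → ℂ) (μ : ℝ)

noncomputable def qpPrimal (x : ι → ℂ) : ℝ := l1 x + (1 / (2 * μ)) * l2sq (A *ᵥ x - b)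

noncomputable def qpDual (y : κ → ℂ) : ℝ := reInner b y - (μ / 2) * l2sq y

noncomputable def qpDualOfPrimal (x : ι → ℂ) : κ → ℂ := μ⁻¹ • (b - A *ᵥ x)

variable {μ}

lemma exists_forall_qpPrimal_le (hμ : 0 ≤ μ) :
    ∃ x, ∀ x', qpPrimal A b μ x ≤ qpPrimal A b μ x' := by
  refine Continuous.exists_forall_le (by unfold qpPrimal l1 l2sq; fun_prop) ?_
  refine tendsto_atTop_mono (fun x => ?_) tendsto_norm_cocompact_atTop
  have hquad : 0 ≤ 1 / (2 * μ) * l2sq (A *ᵥ x - b) := mul_nonneg (by positivity) (l2sq_nonneg _)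
  unfold qpPrimal
  linarith [norm_le_l1 x]

lemma qpPrimal_sub_qpDual (hμ : μ ≠ 0) (x : ι → ℂ) (y : κ → ℂ) :
    qpPrimal A b μ x - qpDual b μ y =
      (l1 x - reInner (Aᴴ *ᵥ y) x) + (1 / (2 * μ)) * l2sq (A *ᵥ x - b + μ • y) := by
  have hcross : reInner (A *ᵥ x - b) y = reInner (Aᴴ *ᵥ y) x - reInner b y := by
    rw [reInner_comm, reInner_sub_right, reInner_conjTranspose_mulVec, reInner_comm y b]
  rw [qpPrimal, qpDual, l2sq_add, l2sq_smul, reInner_smul_right, hcross]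
  field_simp
  ring

lemma qpDual_le_qpPrimal (hμ : 0 < μ) {y : κ → ℂ} (hy : ∀ j, ‖(Aᴴ *ᵥ y) j‖ ≤ 1)
    (x : ι → ℂ) : qpDual b μ y ≤ qpPrimal A b μ x := by
  have hquad : 0 ≤ 1 / (2 * μ) * l2sq (A *ᵥ x - b + μ • y) :=
    mul_nonneg (by positivity) (l2sq_nonneg _)
  linarith [qpPrimal_sub_qpDual A b hμ.ne' x y, reInner_le_l1 hy x]

lemma qpPrimal_eq_qpDual_add (hμ : μ ≠ 0) (x x' : ι → ℂ) :
    qpPrimal A b μ x' = qpDual b μ (qpDualOfPrimal A b μ x) +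
      (l1 x' - reInner (Aᴴ *ᵥ qpDualOfPrimal A b μ x) x') +
      (1 / (2 * μ)) * l2sq (A *ᵥ (x' - x)) := by
  have hres : A *ᵥ x' - b + μ • qpDualOfPrimal A b μ x = A *ᵥ (x' - x) := by
    rw [qpDualOfPrimal, smul_smul, mul_inv_cancel₀ hμ, one_smul, mulVec_sub]
    abel
  rw [← hres]
  linarith [qpPrimal_sub_qpDual A b hμ x' (qpDualOfPrimal A b μ x)]

lemma qpPrimal_eq_qpDual_add_self (hμ : μ ≠ 0) (x : ι → ℂ) :
    qpPrimal A b μ x = qpDual b μ (qpDualOfPrimal A b μ x) +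
      (l1 x - reInner (Aᴴ *ᵥ qpDualOfPrimal A b μ x) x) := by
  simpa using qpPrimal_eq_qpDual_add A b hμ x x

lemma forall_directional_of_forall_qpPrimal_le {A : Matrix κ ι ℂ} {b : κ → ℂ} (hμ : μ ≠ 0)
    {x : ι → ℂ} (hx : ∀ x', qpPrimal A b μ x ≤ qpPrimal A b μ x') (d : ι → ℂ) :
    ∃ C : ℝ, ∀ t : ℝ, 0 < t → t ≤ 1 →
      t * reInner (Aᴴ *ᵥ qpDualOfPrimal A b μ x) d ≤ l1 (x + t • d) - l1 x + t ^ 2 * C := by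
  refine ⟨1 / (2 * μ) * l2sq (A *ᵥ d), fun t _ _ => ?_⟩
  have h0 := qpPrimal_eq_qpDual_add_self A b hμ x
  have ht := qpPrimal_eq_qpDual_add A b hμ x (x + t • d)
  rw [add_sub_cancel_left, mulVec_smul, l2sq_smul, reInner_add_right, reInner_smul_right] at ht
  linarith [hx (x + t • d)]

end QP

/-- Strong duality between QP_mu and its dual (2.17), both optima attained. -/
theorem strong_duality_qp {m n : ℕ} (A : Matrix (Fin m) (Fin n) ℂ) (b : Fin m → ℂ)
    (μ : ℝ) (hμ : 0 < μ) :
    let P : (Fin n → ℂ) → ℝ := fun x => l1 x + (1/(2*μ)) * l2sq (A.mulVec x - b)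
    let D : (Fin m → ℂ) → ℝ := fun y => reInner b y - (μ/2) * l2sq y
    ∃ (xt : Fin n → ℂ) (yt : Fin m → ℂ),
      (∀ x : Fin n → ℂ, P xt ≤ P x) ∧
      linf (Aᴴ.mulVec yt) ≤ 1 ∧
      (∀ y : Fin m → ℂ, linf (Aᴴ.mulVec y) ≤ 1 → D y ≤ D yt) ∧
      P xt = D yt := by
  intro P D
  obtain ⟨xt, hxt⟩ := exists_forall_qpPrimal_le A b hμ.le
  have hdir := forall_directional_of_forall_qpPrimal_le hμ.ne' hxt
  have hfeas := norm_le_one_of_forall_directional hdir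
  have hgap : qpPrimal A b μ xt = qpDual b μ (qpDualOfPrimal A b μ xt) := by
    linarith [qpPrimal_eq_qpDual_add_self A b hμ.ne' xt, reInner_le_l1 hfeas xt,
      l1_le_reInner_of_forall_directional hdir]
  refine ⟨xt, qpDualOfPrimal A b μ xt, hxt, (linf_le_iff zero_le_one _).2 hfeas,
    fun y hy => ?_, hgap⟩
  exact (qpDual_le_qpPrimal A b hμ ((linf_le_iff zero_le_one _).1 hy) xt).trans_eq hgap
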